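/- arXiv:2511.05322 — 3 statements merged into one kernel-verified Lean document; each statement's English description precedes it below -/
import Mathlib

section
/- The matrices A_P = diag(−ζ⁻¹, ζ), A_Q = [[−ζ/ε, 1],[1/ε, −ζ⁻¹/ε]], and A_R = [[1/ε, −ζ⁻¹],[ζ/ε, −1/ε]] over ℚ(ζ₅) (with ζ = ζ₅, ε = ζ+ζ⁻¹) have multiplicative orders 10, 3, and 2 respectively, and satisfy A_P · A_Q · A_R = Id. -/
theorem ord_eq_ten {M : Type*} [Monoid M] (a : M) (h10 : a ^ 10 = 1)
    (h2 : a ^ 2 ≠ 1) (h5 : a ^ 5 ≠ 1) : orderOf a = 10 := by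
  have hd : orderOf a ∣ 10 := orderOf_dvd_of_pow_eq_one h10
  have hn2 : ¬ orderOf a ∣ 2 := fun h => h2 (orderOf_dvd_iff_pow_eq_one.mp h)
  have hn5 : ¬ orderOf a ∣ 5 := fun h => h5 (orderOf_dvd_iff_pow_eq_one.mp h)
  have hle : orderOf a ≤ 10 := Nat.le_of_dvd (by norm_num) hd
  interval_cases h : orderOf a <;> revert hd hn2 hn5 <;> decide

/-- The matrices `A_P = diag(−ζ⁻¹, ζ)`, `A_Q = [[−ζ/ε, 1],[1/ε, −ζ⁻¹/ε]]`, and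
`A_R = [[1/ε, −ζ⁻¹],[ζ/ε, −1/ε]]` over `ℚ(ζ₅)` (with `ζ = ζ₅` a primitive
fifth root of unity and `ε = ζ + ζ⁻¹`) have multiplicative orders `10`, `3`,
and `2` respectively, and satisfy `A_P · A_Q · A_R = Id`. -/
theorem triangle_group_generators (ζ : ℂ)
    (hζ : ζ = Complex.exp (2 * Real.pi * Complex.I / 5))
    (ε : ℂ) (hε : ε = ζ + ζ⁻¹)
    (AP AQ AR : Matrix (Fin 2) (Fin 2) ℂ)
    (hAP : AP = !![-ζ⁻¹, 0; 0, ζ])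
    (hAQ : AQ = !![-ζ / ε, 1; 1 / ε, -ζ⁻¹ / ε])
    (hAR : AR = !![1 / ε, -ζ⁻¹; ζ / ε, -1 / ε]) :
    orderOf AP = 10 ∧ orderOf AQ = 3 ∧ orderOf AR = 2 ∧ AP * AQ * AR = 1 := by
  have hprim : IsPrimitiveRoot ζ 5 := by
    rw [hζ]; exact Complex.isPrimitiveRoot_exp 5 (by norm_num)
  have h5 : ζ ^ 5 = 1 := hprim.pow_eq_one
  have hζ0 : ζ ≠ 0 := hprim.ne_zero (by norm_num)
  have hne1 : ζ ≠ 1 := hprim.ne_one (by norm_num)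
  have hc : ζ ^ 4 + ζ ^ 3 + ζ ^ 2 + ζ + 1 = 0 := by
    have h : (ζ - 1) * (ζ ^ 4 + ζ ^ 3 + ζ ^ 2 + ζ + 1) = 0 := by linear_combination h5
    rcases mul_eq_zero.mp h with h' | h'
    · exact absurd (sub_eq_zero.mp h') hne1
    · exact h'
  have hinv : ζ⁻¹ = ζ ^ 4 := by
    field_simp
    linear_combination -h5
  have hεeq : ε = ζ + ζ ^ 4 := by rw [hε, hinv]
  have hε0 : ε ≠ 0 := by
    rw [hεeq]; intro h
    have h2 : (2 : ℂ) = 0 := by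
      linear_combination (ζ + ζ ^ 2 - ζ ^ 3 - 2) * h5 + (1 + ζ - ζ ^ 2 - ζ ^ 3 + ζ ^ 4) * h
    norm_num at h2
  -- AP part
  have hAPd : AP = Matrix.diagonal ![-ζ ^ 4, ζ] := by
    rw [hAP, hinv]; ext i j; fin_cases i <;> fin_cases j <;> simp [Matrix.diagonal]
  have hpow : ∀ n : ℕ, AP ^ n = Matrix.diagonal (![-ζ ^ 4, ζ] ^ n) := by
    intro n; rw [hAPd, Matrix.diagonal_pow]
  have h40 : (-ζ ^ 4 : ℂ) ^ 10 = 1 := by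
    linear_combination (ζ ^ 35 + ζ ^ 30 + ζ ^ 25 + ζ ^ 20 + ζ ^ 15 + ζ ^ 10 + ζ ^ 5 + 1) * h5
  have h10 : (ζ : ℂ) ^ 10 = 1 := by linear_combination (ζ ^ 5 + 1) * h5
  have hv : (![-ζ ^ 4, ζ] : Fin 2 → ℂ) ^ 10 = 1 := by
    funext i
    fin_cases i <;>
      simp only [Pi.pow_apply, Pi.one_apply, Matrix.cons_val_zero, Matrix.cons_val_one,
        Matrix.head_cons, Fin.isValue]
    · exact h40
    · exact h10
  have hAP10 : AP ^ 10 = 1 := by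
    rw [hpow, hv]; exact Matrix.diagonal_one
  have hAP2 : AP ^ 2 ≠ 1 := by
    intro h
    have h11 := congrFun (congrFun (hpow 2 ▸ h) 1) 1
    simp only [Matrix.diagonal_apply_eq, Matrix.one_apply_eq, Pi.pow_apply,
      Matrix.cons_val_one, Matrix.head_cons, Fin.isValue] at h11
    exact hprim.pow_ne_one_of_pos_of_lt (by norm_num) (by norm_num) h11
  have hAP5 : AP ^ 5 ≠ 1 := by
    intro h
    have h00 := congrFun (congrFun (hpow 5 ▸ h) 0) 0
    simp only [Matrix.diagonal_apply_eq, Matrix.one_apply_eq, Pi.pow_apply,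
      Matrix.cons_val_zero, Fin.isValue] at h00
    have h2 : (2 : ℂ) = 0 := by
      linear_combination -h00 - (ζ ^ 15 + ζ ^ 10 + ζ ^ 5 + 1) * h5
    norm_num at h2
  -- AQ part
  have hAQB : AQ = ε⁻¹ • !![-ζ, ε; 1, -ζ⁻¹] := by
    rw [hAQ]; ext i j; fin_cases i <;> fin_cases j <;>
      simp [Matrix.smul_apply] <;> field_simp <;> ring
  have hB3 : (!![-ζ, ε; 1, -ζ⁻¹] : Matrix (Fin 2) (Fin 2) ℂ) ^ 3 = ε ^ 3 • 1 := by
    rw [pow_succ, pow_succ, pow_one]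
    ext i j
    fin_cases i <;> fin_cases j <;>
      simp [Matrix.mul_apply, Fin.sum_univ_two, Matrix.one_apply, hinv, hεeq]
    · linear_combination (-3 - 3*ζ - ζ^2 - ζ^3 - 3*ζ^4 - ζ^7) * h5 + (-3 : ℂ) * hc
    · linear_combination (2 + 2*ζ + ζ^2 + ζ^3 + 2*ζ^4 + ζ^7) * h5 + 2 * hc
    · linear_combination (1 + ζ^3) * h5 + hc
    · linear_combination (-3 - 3*ζ - 2*ζ^2 - 2*ζ^3 - 3*ζ^4 - 2*ζ^7) * h5 - 3 * hc
  have hAQ3 : AQ ^ 3 = 1 := by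
    rw [hAQB, smul_pow, hB3, smul_smul, inv_pow, inv_mul_cancel₀ (pow_ne_zero 3 hε0), one_smul]
  have hAQne : AQ ≠ 1 := by
    rw [hAQ]; intro h
    have h01 := congrFun (congrFun h 0) 1
    simp [Matrix.one_apply] at h01
  -- AR part
  have hARC : AR = ε⁻¹ • !![1, -ζ⁻¹ * ε; ζ, -1] := by
    rw [hAR]; ext i j; fin_cases i <;> fin_cases j <;>
      simp [Matrix.smul_apply] <;> field_simp <;> ring
  have hC2 : (!![1, -ζ⁻¹ * ε; ζ, -1] : Matrix (Fin 2) (Fin 2) ℂ) ^ 2 = ε ^ 2 • 1 := by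
    rw [pow_succ, pow_one]
    ext i j
    fin_cases i <;> fin_cases j <;>
      simp [Matrix.mul_apply, Fin.sum_univ_two, Matrix.one_apply, hinv, hεeq]
    · linear_combination (-2 - ζ - ζ^3 - ζ^4) * h5 - hc
    · linear_combination (-2 - ζ - ζ^3 - ζ^4) * h5 - hc
  have hAR2 : AR ^ 2 = 1 := by
    rw [hARC, smul_pow, hC2, smul_smul, inv_pow, inv_mul_cancel₀ (pow_ne_zero 2 hε0), one_smul]
  have hARne : AR ≠ 1 := by
    rw [hAR]; intro h
    have h01 := congrFun (congrFun h 0) 1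
    simp [Matrix.one_apply] at h01
    exact hζ0 h01
  -- product
  have hprod : AP * AQ * AR = 1 := by
    rw [hAQB, hARC]
    have hPBC : AP * !![-ζ, ε; 1, -ζ⁻¹] * !![1, -ζ⁻¹ * ε; ζ, -1] = ε ^ 2 • 1 := by
      rw [hAP]
      ext i j
      fin_cases i <;> fin_cases j <;>
        simp [Matrix.mul_apply, Fin.sum_univ_two, Matrix.one_apply, hinv, hεeq]
      · linear_combination (-1 - ζ - ζ^3 - ζ^4) * h5 - hc
      · linear_combination (-ζ^5 - ζ^8) * h5
      · linear_combination (-ζ) * h5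
      · linear_combination (-1 - ζ - ζ^3 - ζ^4) * h5 - hc
    simp only [mul_smul_comm, smul_mul_assoc, smul_smul]
    rw [hPBC, smul_smul]
    have hsc : ε⁻¹ * ε⁻¹ * ε ^ 2 = 1 := by field_simp
    rw [hsc, one_smul]
  haveI : Fact (Nat.Prime 3) := ⟨by norm_num⟩
  haveI : Fact (Nat.Prime 2) := ⟨by norm_num⟩
  exact ⟨ord_eq_ten AP hAP10 hAP2 hAP5, orderOf_eq_prime hAQ3 hAQne,
    orderOf_eq_prime hAR2 hARne, hprod⟩
end

section
/- Let L = ℚ[t]/(t⁴ − 5), a degree-4 field with real embedding t ↦ 5^{1/4}, and let F₀ = ℚ(√5) ⊂ L. The unit η = (t³+t²+t+3)/2 of O_L satisfies N_{L/F₀}(η) = 1, and none of u, −u, u^τ, −u^τ (where u = (1+√5)/2) is a norm from U_L to U_{F₀}. -/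
set_option maxHeartbeats 1000000
set_option synthInstance.maxHeartbeats 400000

open NumberField

open Polynomial IntermediateField in
private lemma aux_finrank {K L : Type*} [Field K] [Field L] [Algebra K L]
    [FiniteDimensional K L] {x : L} (h : IntermediateField.adjoin K {x} = ⊤) :
    Module.finrank K L = (minpoly K x).natDegree := by
  rw [← IntermediateField.adjoin.finrank (IsIntegral.of_finite K x)]
  conv_lhs => rw [← IntermediateField.finrank_top' (F := K) (E := L)]
  rw [← h]

open Polynomial IntermediateField in
private noncomputable def auxPB {K L : Type*} [Field K] [Field L] [Algebra K L]
    [FiniteDimensional K L] {x : L} (h : IntermediateField.adjoin K {x} = ⊤) :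
    PowerBasis K L :=
  (IntermediateField.adjoin.powerBasis (IsIntegral.of_finite K x)).map
    ((IntermediateField.equivOfEq h).trans IntermediateField.topEquiv)

open Polynomial IntermediateField in
private lemma auxPB_gen {K L : Type*} [Field K] [Field L] [Algebra K L]
    [FiniteDimensional K L] {x : L} (h : IntermediateField.adjoin K {x} = ⊤) :
    (auxPB h).gen = x := by
  simp [auxPB, IntermediateField.adjoin.powerBasis_gen]

open Polynomial in
private lemma aux_norm_gen {K L : Type*} [Field K] [Field L] [Algebra K L]
    [FiniteDimensional K L] {x : L} (h : IntermediateField.adjoin K {x} = ⊤) :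
    Algebra.norm K x = (-1) ^ (minpoly K x).natDegree * (minpoly K x).coeff 0 := by
  have := Algebra.PowerBasis.norm_gen_eq_coeff_zero_minpoly (auxPB h)
  rw [auxPB_gen h] at this
  rw [this, ← (auxPB h).natDegree_minpoly, auxPB_gen h]

private lemma zmod5_dec1 : ∀ y : ZMod 5, 2 * y ^ 2 ≠ 1 := by decide

private lemma zmod5_dec2 : ∀ y : ZMod 5, 2 * y ^ 2 ≠ -1 := by decide

/-- Let `L = ℚ[t]/(t⁴−5)` (with real embedding `t ↦ 5^{1/4}`), and
`F₀ = ℚ(√5) ⊂ L`.  The unit `η = (t³+t²+t+3)/2` of `𝓞 L` satisfies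
`N_{L/F₀}(η) = 1`, and none of `u, −u, u^τ, −u^τ` (where `u = (1+√5)/2` and
`u^τ = (1−√5)/2`) is a norm of a unit of `L`. -/
theorem norms_of_units_quartic_field
    (F₀ L : Type*) [Field F₀] [Field L] [NumberField F₀] [NumberField L]
    [Algebra F₀ L]
    (sq5 : F₀) (h5 : sq5 ^ 2 = 5)
    (hF₀gen : IntermediateField.adjoin ℚ {sq5} = ⊤)
    (a : L) (ha : a ^ 4 = 5)
    (hLgen : IntermediateField.adjoin ℚ {a} = ⊤)
    (hmap : algebraMap F₀ L sq5 = a ^ 2)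
    -- the real embedding `t ↦ 5^{1/4}`
    (ρ : L →+* ℝ) (hρ : ρ a = (5 : ℝ) ^ ((1 : ℝ) / 4))
    (η : (𝓞 L)ˣ)
    (hη : algebraMap (𝓞 L) L ↑η = (a ^ 3 + a ^ 2 + a + 3) / 2) :
    Algebra.norm F₀ (algebraMap (𝓞 L) L ↑η) = 1 ∧
    ∀ v : (𝓞 L)ˣ,
      Algebra.norm F₀ (algebraMap (𝓞 L) L ↑v) ≠ (1 + sq5) / 2 ∧
      Algebra.norm F₀ (algebraMap (𝓞 L) L ↑v) ≠ -((1 + sq5) / 2) ∧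
      Algebra.norm F₀ (algebraMap (𝓞 L) L ↑v) ≠ (1 - sq5) / 2 ∧
      Algebra.norm F₀ (algebraMap (𝓞 L) L ↑v) ≠ -((1 - sq5) / 2) := by
  classical
  have inj : Function.Injective (algebraMap F₀ L) := (algebraMap F₀ L).injective
  -- 5 is not a rational square
  have hnotsq : ∀ b : ℚ, b ^ 2 ≠ 5 := by
    intro b hb
    have h5p : Nat.Prime 5 := by norm_num
    refine h5p.irrational_sqrt ⟨|b|, ?_⟩
    have hb' : ((b : ℝ)) ^ 2 = 5 := by exact_mod_cast congrArg (Rat.cast : ℚ → ℝ) hb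
    rw [show ((5:ℕ):ℝ) = ((b:ℝ))^2 by rw [hb']; norm_num, Real.sqrt_sq_eq_abs]
    push_cast
    rfl
  -- minimal polynomial of sq5
  open Polynomial in
  have hirr5 : Irreducible (X ^ 2 - C (5 : ℚ)) :=
    X_pow_sub_C_irreducible_of_prime (by norm_num) hnotsq
  open Polynomial in
  have hmin5 : minpoly ℚ sq5 = X ^ 2 - C (5 : ℚ) := by
    refine (minpoly.eq_of_irreducible_of_monic hirr5 ?_ ?_).symm
    · simp [h5]
    · exact Polynomial.monic_X_pow_sub_C _ two_ne_zero
  have hfr0 : Module.finrank ℚ F₀ = 2 := by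
    rw [aux_finrank hF₀gen, hmin5]
    compute_degree!
  -- norm of sq5
  have hnorm5 : Algebra.norm ℚ sq5 = -5 := by
    rw [aux_norm_gen hF₀gen, hmin5]
    norm_num
  -- sq5 is not a square in F₀
  have hnotsqF : ∀ b : F₀, b ^ 2 ≠ sq5 := by
    intro b hb
    have : (Algebra.norm ℚ b) ^ 2 = -5 := by
      rw [← hnorm5, ← hb, map_pow]
    nlinarith [sq_nonneg (Algebra.norm ℚ b)]
  open Polynomial in
  have hirrA : Irreducible (X ^ 2 - C sq5) :=
    X_pow_sub_C_irreducible_of_prime (by norm_num) hnotsqF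
  open Polynomial in
  have hminA : minpoly F₀ a = X ^ 2 - C sq5 := by
    refine (minpoly.eq_of_irreducible_of_monic hirrA ?_ ?_).symm
    · simp [hmap]
    · exact Polynomial.monic_X_pow_sub_C _ two_ne_zero
  -- a generates L over F₀
  have hLgenF : IntermediateField.adjoin F₀ {a} = ⊤ := by
    have hle : IntermediateField.adjoin ℚ {a} ≤
        (IntermediateField.adjoin F₀ {a}).restrictScalars ℚ := by
      rw [IntermediateField.adjoin_le_iff]
      intro y hy
      rw [Set.mem_singleton_iff] at hy
      rw [hy]
      exact IntermediateField.mem_adjoin_simple_self F₀ a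
    ext x
    simp only [IntermediateField.mem_top, iff_true]
    have hx : x ∈ IntermediateField.adjoin ℚ {a} := by
      rw [hLgen]; exact IntermediateField.mem_top
    exact hle hx
  have hfrF : Module.finrank F₀ L = 2 := by
    rw [aux_finrank hLgenF, hminA]
    compute_degree!
  -- the nontrivial automorphism σ of L/F₀
  have hroot : (Polynomial.aeval (-a)) (minpoly F₀ a) = 0 := by
    rw [hminA]; simp [hmap]
  obtain ⟨σ, hσ⟩ : ∃ σ : L ≃ₐ[F₀] L, σ a = -a := by
    have hg := auxPB_gen hLgenF
    rw [← hg] at hroot ⊢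
    exact ⟨AlgEquiv.ofBijective ((auxPB hLgenF).lift _ hroot) (AlgHom.bijective _),
      (auxPB hLgenF).lift_gen _ hroot⟩
  have ha0 : a ≠ 0 := by
    intro h; rw [h] at ha; norm_num at ha
  have hσne : σ ≠ 1 := by
    intro h
    rw [h] at hσ
    simp only [AlgEquiv.one_apply] at hσ
    have : (2 : L) * a = 0 := by rw [two_mul]; nth_rewrite 1 [hσ]; ring
    rcases mul_eq_zero.mp this with h2 | h2
    · exact two_ne_zero h2
    · exact ha0 h2
  -- L/F₀ is Galois with group {1, σ}
  have hcard : Fintype.card (L ≃ₐ[F₀] L) = 2 := by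
    have hle : Fintype.card (L ≃ₐ[F₀] L) ≤ 2 := by
      calc Fintype.card (L ≃ₐ[F₀] L) = Fintype.card (L →ₐ[F₀] L) :=
            Fintype.card_congr (algEquivEquivAlgHom F₀ L).toEquiv
        _ ≤ Module.finrank L (L →ₗ[F₀] L) := finrank_algHom F₀ L
        _ = Module.finrank F₀ L := Module.finrank_linearMap_self F₀ L L
        _ = 2 := hfrF
    have hge : 2 ≤ Fintype.card (L ≃ₐ[F₀] L) := by
      have : ({1, σ} : Finset (L ≃ₐ[F₀] L)).card = 2 := by
        rw [Finset.card_insert_of_notMem (by simpa using hσne.symm), Finset.card_singleton]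
      rw [← this]
      exact Finset.card_le_univ _
    omega
  haveI hGal : IsGalois F₀ L := IsGalois.of_card_aut_eq_finrank F₀ L (by rw [Nat.card_eq_fintype_card, hcard, hfrF])
  have huniv : (Finset.univ : Finset (L ≃ₐ[F₀] L)) = {1, σ} := by
    symm
    apply Finset.eq_univ_of_card
    rw [Finset.card_insert_of_notMem (by simpa using hσne.symm), Finset.card_singleton, hcard]
  -- The key norm formula
  have key : ∀ x : L, algebraMap F₀ L (Algebra.norm F₀ x) = x * σ x := by
    intro x
    rw [Algebra.norm_eq_prod_automorphisms, huniv, Finset.prod_insert (by simpa using hσne.symm),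
      Finset.prod_singleton, AlgEquiv.one_apply]
  -- Part 1 : the norm of η is 1
  have hσeta : σ ((a ^ 3 + a ^ 2 + a + 3) / 2) = ((-a) ^ 3 + (-a) ^ 2 + (-a) + 3) / 2 := by
    simp only [map_div₀, map_add, map_pow, hσ, map_ofNat]
  have part1 : Algebra.norm F₀ (algebraMap (𝓞 L) L ↑η) = 1 := by
    apply inj
    rw [key, map_one, hη, hσeta]
    have h2 : (2 : L) ≠ 0 := two_ne_zero
    field_simp
    ring_nf
    linear_combination (-a^2 - 1) * ha
  refine ⟨part1, ?_⟩
  -- integrality of a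
  have haInt : IsIntegral ℤ a := by
    refine ⟨Polynomial.X ^ 4 - Polynomial.C 5, Polynomial.monic_X_pow_sub_C _ (by norm_num), ?_⟩
    have : Polynomial.eval₂ (algebraMap ℤ L) a (Polynomial.X ^ 4 - Polynomial.C 5)
        = a ^ 4 - 5 := by
      simp
    rw [this, ha, sub_self]
  set A : 𝓞 L := ⟨a, haInt⟩ with hAdef
  have hAcoe : algebraMap (𝓞 L) L A = a := rfl
  -- norm computations
  have hNa : Algebra.norm F₀ a = -sq5 := by
    apply inj
    rw [key, hσ, map_neg, hmap]
    ring
  have hNm1 : Algebra.norm ℚ (-1 : F₀) = 1 := by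
    rw [show (-1 : F₀) = algebraMap ℚ F₀ (-1) by simp, Algebra.norm_algebraMap, hfr0]
    norm_num
  have hNQa : Algebra.norm ℚ a = -5 := by
    rw [← Algebra.norm_norm (R := ℚ) (S := F₀) (a := a), hNa, show (-sq5) = -1 * sq5 by ring, map_mul, hNm1,
      hnorm5]
    norm_num
  have hNZA : Algebra.norm ℤ A = -5 := by
    have h1 : ((Algebra.norm ℤ A : ℤ) : ℚ) = -5 := by
      rw [Algebra.coe_norm_int A]
      exact hNQa
    exact_mod_cast h1
  set I : Ideal (𝓞 L) := Ideal.span {A} with hIdef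
  have hcardR : Nat.card (𝓞 L ⧸ I) = 5 := by
    have h1 : Ideal.absNorm I = 5 := by
      rw [hIdef, Ideal.absNorm_span_singleton, hNZA]
      rfl
    rw [← h1, Ideal.absNorm_apply, Submodule.cardQuot_apply]
  have hA4 : A ^ 4 = (5 : 𝓞 L) := by
    have : (algebraMap (𝓞 L) L) (A ^ 4) = (algebraMap (𝓞 L) L) (5 : 𝓞 L) := by
      rw [map_pow, hAcoe, ha, map_ofNat]
    exact RingOfIntegers.coe_injective this
  have hmkA : Ideal.Quotient.mk I A = 0 := by
    rw [Ideal.Quotient.eq_zero_iff_mem]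
    exact Ideal.mem_span_singleton_self A
  have h5R : (5 : 𝓞 L ⧸ I) = 0 := by
    calc (5 : 𝓞 L ⧸ I) = Ideal.Quotient.mk I (5 : 𝓞 L) := (map_ofNat _ 5).symm
      _ = (Ideal.Quotient.mk I A) ^ 4 := by rw [← hA4, map_pow]
      _ = 0 := by rw [hmkA]; norm_num
  haveI hRnt : Nontrivial (𝓞 L ⧸ I) := by
    rcases subsingleton_or_nontrivial (𝓞 L ⧸ I) with hs | hn
    · exfalso
      haveI : Unique (𝓞 L ⧸ I) := uniqueOfSubsingleton 0
      have h1 : Nat.card (𝓞 L ⧸ I) = 1 := Nat.card_unique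
      omega
    · exact hn
  haveI hRfin : Finite (𝓞 L ⧸ I) := Nat.finite_of_card_ne_zero (by omega)
  haveI hchar : CharP (𝓞 L ⧸ I) 5 := by
    haveI := ringChar.charP (𝓞 L ⧸ I)
    have hdvd : ringChar (𝓞 L ⧸ I) ∣ 5 :=
      (CharP.cast_eq_zero_iff (𝓞 L ⧸ I) (ringChar (𝓞 L ⧸ I)) 5).mp (by exact_mod_cast h5R)
    rcases Nat.Prime.eq_one_or_self_of_dvd (by norm_num) _ hdvd with h1 | h5'
    · exfalso
      have : ((1 : ℕ) : 𝓞 L ⧸ I) = 0 :=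
        (CharP.cast_eq_zero_iff _ (ringChar _) 1).mpr (by rw [h1] : ringChar (𝓞 L ⧸ I) ∣ 1)
      rw [Nat.cast_one] at this
      exact one_ne_zero this
    · exact ringChar.of_eq h5'
  haveI hfact5 : Fact (Nat.Prime 5) := ⟨by norm_num⟩
  set e : ZMod 5 →+* (𝓞 L ⧸ I) := ZMod.castHom dvd_rfl (𝓞 L ⧸ I) with hedef
  have hebij : Function.Bijective e := by
    haveI : Fintype (𝓞 L ⧸ I) := Fintype.ofFinite _
    rw [Fintype.bijective_iff_injective_and_card]
    refine ⟨e.injective, ?_⟩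
    rw [ZMod.card, ← Nat.card_eq_fintype_card, hcardR]
  set E : ZMod 5 ≃+* (𝓞 L ⧸ I) := RingEquiv.ofBijective e hebij with hEdef
  set f : 𝓞 L →+* ZMod 5 := (E.symm : (𝓞 L ⧸ I) ≃+* ZMod 5).toRingHom.comp
    (Ideal.Quotient.mk I) with hfdef
  have hfA : f A = 0 := by
    rw [hfdef]
    simp only [RingHom.comp_apply, RingEquiv.toRingHom_eq_coe, RingHom.coe_coe, hmkA, map_zero]
  -- the Galois action on the ring of integers
  set σQ : L ≃ₐ[ℚ] L := AlgEquiv.restrictScalars ℚ σ with hσQdef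
  set g : 𝓞 L ≃ₐ[ℤ] 𝓞 L := galRestrict ℤ ℚ L (𝓞 L) σQ with hgdef
  have hg : ∀ x : 𝓞 L, algebraMap (𝓞 L) L (g x) = σ (algebraMap (𝓞 L) L x) := by
    intro x
    have := algebraMap_galRestrict_apply ℤ σQ x
    rw [hgdef]
    exact this
  -- f is invariant under g
  have hgA : g A = -A := by
    apply RingOfIntegers.coe_injective
    rw [hg, map_neg, hAcoe, hσ]
  have hfg : ∀ x : 𝓞 L, f (g x) = f x := by
    have hF1A : f (g A) = 0 := by rw [hgA, map_neg, hfA, neg_zero]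
    set F1 : 𝓞 L →+* ZMod 5 := f.comp (g : 𝓞 L ≃ₐ[ℤ] 𝓞 L).toAlgHom.toRingHom with hF1def
    have hF1ker : I ≤ RingHom.ker F1 := by
      rw [hIdef, Ideal.span_le, Set.singleton_subset_iff]
      exact hF1A
    have hfker : I ≤ RingHom.ker f := by
      rw [hIdef, Ideal.span_le, Set.singleton_subset_iff]
      exact hfA
    set F1bar := Ideal.Quotient.lift I F1 (fun x hx => hF1ker hx) with hF1bar
    set fbar := Ideal.Quotient.lift I f (fun x hx => hfker hx) with hfbar
    have heq : F1bar.comp (E : ZMod 5 →+* (𝓞 L ⧸ I)) =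
        fbar.comp (E : ZMod 5 →+* (𝓞 L ⧸ I)) := RingHom.ext_zmod _ _
    have heq2 : F1bar = fbar := by
      refine RingHom.ext fun r => ?_
      obtain ⟨y, hy⟩ := hebij.2 r
      rw [← hy]
      have h1 : E y = e y := rfl
      calc F1bar (e y) = (F1bar.comp (E : ZMod 5 →+* (𝓞 L ⧸ I))) y := by rw [← h1]; rfl
        _ = (fbar.comp (E : ZMod 5 →+* (𝓞 L ⧸ I))) y := by rw [heq]
        _ = fbar (e y) := by rw [← h1]; rfl
    intro x
    have h3 : F1 x = f x := by
      have := congrArg (fun h => h (Ideal.Quotient.mk I x)) heq2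
      exact this
    rw [← h3]
    rfl
  -- the contradiction engine
  have main : ∀ (v : (𝓞 L)ˣ) (c : F₀) (Cc : 𝓞 L),
      (algebraMap (𝓞 L) L Cc) = algebraMap F₀ L c →
      Algebra.norm F₀ (algebraMap (𝓞 L) L ↑v) = c → f Cc = (f ↑v) ^ 2 := by
    intro v c Cc hCc hNv
    have h1 : algebraMap (𝓞 L) L ((v : 𝓞 L) * g (v : 𝓞 L)) = algebraMap (𝓞 L) L Cc := by
      rw [map_mul, hg, ← key, hNv, hCc]
    have h2 : (v : 𝓞 L) * g (v : 𝓞 L) = Cc := RingOfIntegers.coe_injective h1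
    rw [← h2, map_mul, hfg, sq]
  -- the two candidate elements
  have hCuInt : IsIntegral ℤ ((1 + a ^ 2) / 2 : L) := by
    refine ⟨Polynomial.X ^ 2 - Polynomial.X - Polynomial.C 1,
      by monicity!, ?_⟩
    have : Polynomial.eval₂ (algebraMap ℤ L) ((1 + a ^ 2) / 2)
        (Polynomial.X ^ 2 - Polynomial.X - Polynomial.C 1)
        = ((1 + a ^ 2) / 2) ^ 2 - (1 + a ^ 2) / 2 - 1 := by simp
    rw [this]
    have h : ((1 + a ^ 2) / 2) ^ 2 - (1 + a ^ 2) / 2 - 1 = (a ^ 4 - 5) / 4 := by ring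
    rw [h, ha, sub_self, zero_div]
  have hCtInt : IsIntegral ℤ ((1 - a ^ 2) / 2 : L) := by
    refine ⟨Polynomial.X ^ 2 - Polynomial.X - Polynomial.C 1,
      by monicity!, ?_⟩
    have : Polynomial.eval₂ (algebraMap ℤ L) ((1 - a ^ 2) / 2)
        (Polynomial.X ^ 2 - Polynomial.X - Polynomial.C 1)
        = ((1 - a ^ 2) / 2) ^ 2 - (1 - a ^ 2) / 2 - 1 := by simp
    rw [this]
    have h : ((1 - a ^ 2) / 2) ^ 2 - (1 - a ^ 2) / 2 - 1 = (a ^ 4 - 5) / 4 := by ring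
    rw [h, ha, sub_self, zero_div]
  set Cu : 𝓞 L := ⟨(1 + a ^ 2) / 2, hCuInt⟩ with hCudef
  set Ct : 𝓞 L := ⟨(1 - a ^ 2) / 2, hCtInt⟩ with hCtdef
  have hCucoe : algebraMap (𝓞 L) L Cu = (1 + a ^ 2) / 2 := rfl
  have hCtcoe : algebraMap (𝓞 L) L Ct = (1 - a ^ 2) / 2 := rfl
  have hCu : algebraMap (𝓞 L) L Cu = algebraMap F₀ L ((1 + sq5) / 2) := by
    rw [hCucoe, map_div₀, map_add, map_one, hmap, map_ofNat]
  have hCt : algebraMap (𝓞 L) L Ct = algebraMap F₀ L ((1 - sq5) / 2) := by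
    rw [hCtcoe, map_div₀, map_sub, map_one, hmap, map_ofNat]
  have hCuneg : algebraMap (𝓞 L) L (-Cu) = algebraMap F₀ L (-((1 + sq5) / 2)) := by
    rw [map_neg, map_neg, hCu]
  have hCtneg : algebraMap (𝓞 L) L (-Ct) = algebraMap F₀ L (-((1 - sq5) / 2)) := by
    rw [map_neg, map_neg, hCt]
  -- values of f on the candidates
  have h2Cu : (2 : 𝓞 L) * Cu = 1 + A ^ 2 := by
    apply RingOfIntegers.coe_injective
    rw [map_mul, map_add, map_pow, map_one, map_ofNat, hCucoe, hAcoe]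
    ring
  have h2Ct : (2 : 𝓞 L) * Ct = 1 - A ^ 2 := by
    apply RingOfIntegers.coe_injective
    rw [map_mul, map_sub, map_pow, map_one, map_ofNat, hCtcoe, hAcoe]
    ring
  have hfCu : (2 : ZMod 5) * f Cu = 1 := by
    have : f ((2 : 𝓞 L) * Cu) = f (1 + A ^ 2) := by rw [h2Cu]
    rw [map_mul, map_ofNat, map_add, map_pow, map_one, hfA] at this
    rw [this]
    norm_num
  have hfCt : (2 : ZMod 5) * f Ct = 1 := by
    have : f ((2 : 𝓞 L) * Ct) = f (1 - A ^ 2) := by rw [h2Ct]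
    rw [map_mul, map_ofNat, map_sub, map_pow, map_one, hfA] at this
    rw [this]
    norm_num
  -- finish
  intro v
  have hdec1 := zmod5_dec1
  have hdec2 := zmod5_dec2
  refine ⟨fun hN => ?_, fun hN => ?_, fun hN => ?_, fun hN => ?_⟩
  · have h := main v _ Cu hCu hN
    exact hdec1 (f ↑v) (by rw [← h]; exact hfCu)
  · have h := main v _ (-Cu) hCuneg hN
    refine hdec2 (f ↑v) ?_
    rw [← h, map_neg, mul_neg, hfCu]
  · have h := main v _ Ct hCt hN
    exact hdec1 (f ↑v) (by rw [← h]; exact hfCt)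
  · have h := main v _ (-Ct) hCtneg hN
    refine hdec2 (f ↑v) ?_
    rw [← h, map_neg, mul_neg, hfCt]
end

section
/- Let F₀ = ℚ(√5), u = (1+√5)/2, L₁ = F₀(5^{1/4}), and η₁ = u(5^{1/4} + u) a unit of norm 1 in L₁/F₀. The F₀-linear map (x₁,d₁) ↦ (u(ux₁ + √5 d₁), u(x₁ + u d₁)) corresponds to multiplication by η₁ on L₁ under (x₁,d₁) ↦ x₁ + 5^{1/4}d₁, preserves O_{F₀}², and preserves the value of the form −u(x₁² − √5 d₁²). Moreover it swaps the residue classes (x₁,d₁) ≡ (0,u) and (x₁,d₁) ≡ (u²,1) modulo 2·O_{F₀}. -/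
open NumberField

/-- Let `F₀ = ℚ(√5)`, `u = (1+√5)/2`, `L₁ = F₀(5^{1/4})`, and
`η₁ = u·(5^{1/4} + u)`, a unit of norm `1` in `L₁/F₀`.  The `F₀`-linear map
`(x₁, d₁) ↦ (u(ux₁ + √5 d₁), u(x₁ + u d₁))` corresponds to multiplication by
`η₁` under `(x₁, d₁) ↦ x₁ + 5^{1/4} d₁`, preserves `𝓞 F₀ × 𝓞 F₀`, preserves
the value of the form `−u(x₁² − √5 d₁²)`, and swaps the residue classes
`(x₁, d₁) ≡ (0, u)` and `(x₁, d₁) ≡ (u², 1)` modulo `2·𝓞 F₀`. -/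
theorem eta_multiplication_map
    (F₀ L₁ : Type*) [Field F₀] [Field L₁] [NumberField F₀] [NumberField L₁]
    [Algebra F₀ L₁]
    (sq5 u : F₀) (h5 : sq5 ^ 2 = 5) (hu : u = (1 + sq5) / 2)
    (hF₀gen : IntermediateField.adjoin ℚ {sq5} = ⊤)
    (b : L₁) (hb : b ^ 2 = algebraMap F₀ L₁ sq5)
    (hbr : b ∉ (algebraMap F₀ L₁).range)
    (hdeg : Module.finrank F₀ L₁ = 2)
    (η₁ : L₁) (hη₁ : η₁ = algebraMap F₀ L₁ u * (b + algebraMap F₀ L₁ u))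
    (uO s5O : 𝓞 F₀)
    (huO : algebraMap (𝓞 F₀) F₀ uO = u)
    (hs5O : algebraMap (𝓞 F₀) F₀ s5O = sq5) :
    -- `η₁` has norm `1`
    Algebra.norm F₀ η₁ = 1 ∧
    -- the map corresponds to multiplication by `η₁`
    (∀ x₁ d₁ : F₀,
        η₁ * (algebraMap F₀ L₁ x₁ + b * algebraMap F₀ L₁ d₁)
          = algebraMap F₀ L₁ (u * (u * x₁ + sq5 * d₁))
            + b * algebraMap F₀ L₁ (u * (x₁ + u * d₁))) ∧
    -- it preserves integrality (in both directions)
    (∀ x₁ d₁ : F₀, (IsIntegral ℤ x₁ ∧ IsIntegral ℤ d₁) ↔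
        (IsIntegral ℤ (u * (u * x₁ + sq5 * d₁)) ∧ IsIntegral ℤ (u * (x₁ + u * d₁)))) ∧
    -- it preserves the value of the form `−u(x₁² − √5 d₁²)`
    (∀ x₁ d₁ : F₀,
        -u * ((u * (u * x₁ + sq5 * d₁)) ^ 2 - sq5 * (u * (x₁ + u * d₁)) ^ 2)
          = -u * (x₁ ^ 2 - sq5 * d₁ ^ 2)) ∧
    -- it swaps the residue classes `(0, u)` and `(u², 1)` modulo `2·𝓞 F₀`
    (∀ X D : 𝓞 F₀,
        (((2 : 𝓞 F₀) ∣ X ∧ (2 : 𝓞 F₀) ∣ (D - uO)) →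
          ((2 : 𝓞 F₀) ∣ (uO * (uO * X + s5O * D) - uO ^ 2)
            ∧ (2 : 𝓞 F₀) ∣ (uO * (X + uO * D) - 1))) ∧
        (((2 : 𝓞 F₀) ∣ (X - uO ^ 2) ∧ (2 : 𝓞 F₀) ∣ (D - 1)) →
          ((2 : 𝓞 F₀) ∣ (uO * (uO * X + s5O * D))
            ∧ (2 : 𝓞 F₀) ∣ (uO * (X + uO * D) - uO)))) := by 
  have hs2 : sq5 = 2 * u - 1 := by rw [hu]; ring
  have h5' : (2 * u - 1) ^ 2 = 5 := by rw [← hs2]; exact h5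
  have husq : u ^ 2 = u + 1 := by linear_combination (1/4 : F₀) * h5'
  have key : u ^ 4 - u ^ 2 * sq5 = 1 := by
    rw [hs2]; linear_combination (u ^ 2 - u + 1) * husq
  -- the multiplication identity (conjunct 2)
  have hmul : ∀ x₁ d₁ : F₀,
      η₁ * (algebraMap F₀ L₁ x₁ + b * algebraMap F₀ L₁ d₁)
        = algebraMap F₀ L₁ (u * (u * x₁ + sq5 * d₁))
          + b * algebraMap F₀ L₁ (u * (x₁ + u * d₁)) := by
    intro x₁ d₁
    subst hη₁
    simp only [map_mul, map_add]
    linear_combination (algebraMap F₀ L₁ u * algebraMap F₀ L₁ d₁) * hb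
  -- the norm (conjunct 1)
  have hnorm : Algebra.norm F₀ η₁ = 1 := by
    have hli : LinearIndependent F₀ ![(1 : L₁), b] := by
      rw [LinearIndependent.pair_iff]
      intro s t hst
      rw [Algebra.smul_def, mul_one, Algebra.smul_def] at hst
      rcases eq_or_ne t 0 with ht | ht
      · subst ht
        simp only [map_zero, zero_mul, add_zero] at hst
        exact ⟨(algebraMap F₀ L₁).injective (by simpa using hst), rfl⟩
      · exfalso
        apply hbr
        refine ⟨-s / t, ?_⟩
        have htL : algebraMap F₀ L₁ t ≠ 0 := by
          simpa using (map_ne_zero (algebraMap F₀ L₁)).mpr ht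
        field_simp
        rw [map_neg, map_div₀, neg_eq_iff_eq_neg, div_eq_iff htL]
        linear_combination hst
    have hcard : Fintype.card (Fin 2) = Module.finrank F₀ L₁ := by simp [hdeg]
    set B : Module.Basis (Fin 2) F₀ L₁ := basisOfLinearIndependentOfCardEqFinrank hli hcard with hB
    have hB0 : B 0 = 1 := by
      rw [hB, coe_basisOfLinearIndependentOfCardEqFinrank]; rfl
    have hB1 : B 1 = b := by
      rw [hB, coe_basisOfLinearIndependentOfCardEqFinrank]; rfl
    have hM : Algebra.leftMulMatrix B η₁ = !![u^2, u*sq5; u, u^2] := by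
      rw [Algebra.leftMulMatrix_apply]
      have : Algebra.lmul F₀ L₁ η₁ = Matrix.toLin B B !![u^2, u*sq5; u, u^2] := by
        apply B.ext
        intro i
        rw [Matrix.toLin_self]
        fin_cases i <;>
          simp only [Fin.zero_eta, Fin.mk_one, hB0, hB1, Fin.sum_univ_two, Fin.isValue,
            Matrix.cons_val', Matrix.cons_val_zero, Matrix.cons_val_one, Matrix.head_cons,
            Matrix.empty_val', Matrix.cons_val_fin_one, Matrix.head_fin_const, Matrix.of_apply,
            Algebra.coe_lmul_eq_mul, Module.End.mul_apply, LinearMap.mul_apply', Algebra.smul_def, mul_one, hη₁,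
            map_mul, map_pow]
        · ring
        · linear_combination (algebraMap F₀ L₁ u) * hb
      rw [this, LinearMap.toMatrix_toLin]
    rw [Algebra.norm_eq_matrix_det B, hM, Matrix.det_fin_two_of]
    linear_combination key
  -- integrality helpers
  have intu : IsIntegral ℤ u := huO ▸ uO.isIntegral_coe
  have ints : IsIntegral ℤ sq5 := hs5O ▸ s5O.isIntegral_coe
  refine ⟨hnorm, hmul, ?_, ?_, ?_⟩
  · -- integrality equivalence
    intro x₁ d₁
    constructor
    · rintro ⟨hx, hd⟩
      exact ⟨intu.mul ((intu.mul hx).add (ints.mul hd)),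
        intu.mul (hx.add (intu.mul hd))⟩
    · rintro ⟨hA, hB⟩
      have hx' : x₁ = u ^ 2 * (u * (u * x₁ + sq5 * d₁)) - u * sq5 * (u * (x₁ + u * d₁)) := by
        linear_combination (-x₁) * key
      have hd' : d₁ = -u * (u * (u * x₁ + sq5 * d₁)) + u ^ 2 * (u * (x₁ + u * d₁)) := by
        linear_combination (-d₁) * key
      constructor
      · rw [hx']
        exact ((intu.pow 2).mul hA).sub ((intu.mul ints).mul hB)
      · rw [hd']
        exact (intu.neg.mul hA).add ((intu.pow 2).mul hB)
  · -- the form is preserved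
    intro x₁ d₁
    linear_combination (-u * (x₁ ^ 2 - sq5 * d₁ ^ 2)) * key
  · -- residue classes
    have hinj : Function.Injective (algebraMap (𝓞 F₀) F₀) := RingOfIntegers.coe_injective
    have husqO : uO ^ 2 = uO + 1 := by
      apply hinj
      simp only [map_pow, map_add, map_one, huO]
      exact husq
    have hsO : s5O = 2 * uO - 1 := by
      apply hinj
      simp only [map_sub, map_mul, map_one, map_ofNat, huO, hs5O]
      exact hs2
    subst hsO
    intro X D
    constructor
    · rintro ⟨⟨a, rfl⟩, ⟨c, hc⟩⟩
      have hD : D = 2 * c + uO := by linear_combination hc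
      subst hD
      constructor
      · exact ⟨uO^2*a + (2*uO^2 - uO)*c + uO^3 - uO^2, by ring⟩
      · exact ⟨uO*a + uO^2*c + uO, by linear_combination (uO + 1) * husqO⟩
    · rintro ⟨⟨a, ha⟩, ⟨c, hc⟩⟩
      have hX : X = 2 * a + uO ^ 2 := by linear_combination ha
      have hD : D = 2 * c + 1 := by linear_combination hc
      subst hX; subst hD
      constructor
      · exact ⟨uO^2*a + (2*uO^2 - uO)*c + 2*uO + 2, by linear_combination (uO^2 + uO + 4) * husqO⟩
      · exact ⟨uO*a + uO^2*c + uO + 1, by linear_combination (uO + 2) * husqO⟩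
end
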